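/- arXiv:1309.5440 — 2 statements merged into one kernel-verified Lean document; each statement's English description precedes it below -/
import Mathlib

section
/- Fix α ∈ (0,1), let ᾱ = 1-α and c = (1 + ᾱ·α^{α/ᾱ})^{-1}, and fix an initial state s₀ ∈ {0,1}. For the POST(α) channel with channel causal conditioning q_{s₀}(y^n‖x^n) = ∏_{i=1}^n W(y_i | x_i, y_{i-1}) (with y₀ = s₀), every n ≥ 1 and every causal conditioning pmf p(x^n‖y^{n-1}) satisfy I(X^n → Y^n) ≤ -n·log₂ c, where I(X^n → Y^n) is the directed information of p through q_{s₀} with logarithm base 2. -/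
open Finset

/-- `p : {0,1}ⁿ × {0,1}ⁿ⁻¹ → ℝ` is a causal conditioning pmf `p(xⁿ‖yⁿ⁻¹)`. -/
def IsCausalCond (n : ℕ)
    (p : (Fin n → Bool) → (Fin (n - 1) → Bool) → ℝ) : Prop :=
  ∃ q : (i : Fin n) → Bool → (Fin i.1 → Bool) → (Fin i.1 → Bool) → ℝ,
    (∀ i xi xs ys, 0 ≤ q i xi xs ys) ∧
    (∀ i xs ys, (∑ xi, q i xi xs ys) = 1) ∧
    (∀ x y, p x y =
      ∏ i, q i (x i) (fun j => x ⟨j.1, by have := j.isLt; have := i.isLt; omega⟩)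
        (fun j => y ⟨j.1, by have := j.isLt; have := i.isLt; omega⟩))

/-- The per-letter kernel `W(y | x, s)` of the POST(α) channel: if `s = 0` it is a
`Z` channel with parameter `α`, and if `s = 1` it is an `S` channel with parameter `α`
(`0 ↦ false`, `1 ↦ true`). -/
noncomputable def postW (α : ℝ) (y x s : Bool) : ℝ :=
  if x = s then (if y = x then 1 else 0) else (if y = x then 1 - α else α)

/-- The channel causal conditioning `q_{s₀}(yⁿ‖xⁿ) = ∏_{i=1}^n W(y_i | x_i, y_{i-1})`
of the POST(α) channel, with `y₀ = s₀`. -/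
noncomputable def postQ (α : ℝ) (s₀ : Bool) (n : ℕ)
    (x y : Fin n → Bool) : ℝ :=
  ∏ i : Fin n, postW α (y i) (x i)
    (if i.1 = 0 then s₀ else y ⟨i.1 - 1, by have := i.isLt; omega⟩)

/-- The prefix `yⁿ⁻¹` of `yⁿ`. -/
def pref (n : ℕ) (y : Fin n → Bool) : Fin (n - 1) → Bool :=
  fun j => y ⟨j.1, by have := j.isLt; omega⟩

/-- The directed information `I(Xⁿ → Yⁿ)` (in bits) of an input causal conditioning
`p(xⁿ‖yⁿ⁻¹)` through a channel `q(yⁿ‖xⁿ)`. -/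
noncomputable def dirInfo2 (n : ℕ)
    (p : (Fin n → Bool) → (Fin (n - 1) → Bool) → ℝ)
    (q : (Fin n → Bool) → (Fin n → Bool) → ℝ) : ℝ :=
  ∑ x, ∑ y, p x (pref n y) * q x y *
    Real.logb 2 (q x y / ∑ x', p x' (pref n y) * q x' y)

/-! For any positive law `R` on output words, the directed information splits as
`E[log₂ (q(Yⁿ‖Xⁿ) / R(Yⁿ))] - D(P_{Yⁿ} ‖ R)`, and the divergence is nonnegative (Gibbs).
Take for `R` the Markov chain started in `s₀` that keeps its state with probability `c`.
Against it every input letter in every state has the same one-step divergence `-log₂ c`: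
for `x = s` the output is `s` surely, and for `x ≠ s` this is the identity
`ᾱ log₂ (ᾱ / (1 - c)) + α log₂ (α / c) = -log₂ c`, which holds because `1 - c = ᾱ α^(α/ᾱ) c`.
Along the causal factorisation of the joint law the first term is therefore exactly
`-n log₂ c`, whatever the input. -/

open Real

section CausalKernels

variable {Z : Type*}

theorem sum_fun_fin_succ_eq_sum_snoc [Fintype Z] {M : Type*} [AddCommMonoid M] {n : ℕ}
    (f : (Fin (n + 1) → Z) → M) :
    ∑ z, f z = ∑ z : Fin n → Z, ∑ b : Z, f (Fin.snoc z b) := by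
  rw [← Fintype.sum_prod_type_right']
  exact (Fintype.sum_equiv (Fin.snocEquiv fun _ => Z) _ _ fun _ => rfl).symm

theorem Fin.take_snoc_of_lt {n : ℕ} (i : Fin n) (z : Fin n → Z) (b : Z) :
    Fin.take i i.castSucc.2.le (Fin.snoc z b : Fin (n + 1) → Z) = Fin.take i i.2.le z :=
  funext fun j => Fin.snoc_castSucc (α := fun _ => Z) _ _ (Fin.castLE i.2.le j)

theorem Fin.take_snoc {n : ℕ} (z : Fin n → Z) (b : Z) :
    Fin.take n n.le_succ (Fin.snoc z b : Fin (n + 1) → Z) = z :=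
  funext fun j => Fin.snoc_castSucc (α := fun _ => Z) _ _ j

theorem sum_prod_kernel_mul_add_sum [Fintype Z] {n : ℕ}
    (κ ℓ : (i : Fin n) → (Fin i → Z) → Z → ℝ) (C : ℝ)
    (hκ : ∀ i h, ∑ b, κ i h b = 1) (hℓ : ∀ i h, ∑ b, κ i h b * ℓ i h b = C) (t : ℝ) :
    ∑ z : Fin n → Z, (∏ i, κ i (Fin.take i i.2.le z) (z i)) *
      (t + ∑ i, ℓ i (Fin.take i i.2.le z) (z i)) = t + n * C := by
  induction n generalizing t with
  | zero => simp
  | succ n ih =>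
    have step : ∀ (z : Fin n → Z) (b : Z),
        (∏ i, κ i (Fin.take i i.2.le (Fin.snoc (α := fun _ => Z) z b))
            (Fin.snoc (α := fun _ => Z) z b i)) *
          (t + ∑ i, ℓ i (Fin.take i i.2.le (Fin.snoc (α := fun _ => Z) z b))
            (Fin.snoc (α := fun _ => Z) z b i)) =
        (∏ i : Fin n, κ i.castSucc (Fin.take i i.2.le z) (z i)) *
          (κ (Fin.last n) z b * (t + ∑ i : Fin n, ℓ i.castSucc (Fin.take i i.2.le z) (z i)
            + ℓ (Fin.last n) z b)) := by
      intro z b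
      simp only [Fin.prod_univ_castSucc, Fin.sum_univ_castSucc, Fin.snoc_castSucc, Fin.snoc_last,
        Fin.val_castSucc, Fin.val_last, Fin.take_snoc_of_lt, Fin.take_snoc]
      ring
    calc _ = ∑ z : Fin n → Z, (∏ i : Fin n, κ i.castSucc (Fin.take i i.2.le z) (z i)) *
          ((t + C) + ∑ i : Fin n, ℓ i.castSucc (Fin.take i i.2.le z) (z i)) := by
          rw [sum_fun_fin_succ_eq_sum_snoc]
          refine Finset.sum_congr rfl fun z _ => ?_
          simp only [step, ← Finset.mul_sum, mul_add, Finset.sum_add_distrib, ← Finset.sum_mul,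
            hκ, hℓ]
          ring
      _ = t + (n + 1 : ℕ) * C := by
          rw [ih (fun i => κ i.castSucc) (fun i => ℓ i.castSucc) (fun i => hκ i.castSucc)
            (fun i => hℓ i.castSucc)]
          push_cast
          ring

end CausalKernels

theorem sum_sum_pi_eq_sum_pi_prod {X Y M : Type*} [Fintype X] [Fintype Y] [AddCommMonoid M]
    {n : ℕ} (f : (Fin n → X) → (Fin n → Y) → M) :
    ∑ x, ∑ y, f x y = ∑ z : Fin n → X × Y, f (Prod.fst ∘ z) (Prod.snd ∘ z) := by
  rw [← Fintype.sum_prod_type']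
  exact (Fintype.sum_equiv (Equiv.arrowProdEquivProdArrow _ (fun _ => X) (fun _ => Y)) _ _
    fun _ => rfl).symm

def lastD {Y : Type*} (s₀ : Y) {m : ℕ} (y : Fin m → Y) : Y :=
  if hm : m = 0 then s₀ else y ⟨m - 1, by omega⟩

theorem sum_sum_causal_mul_add_sum {X Y : Type*} [Fintype X] [Fintype Y] {n : ℕ}
    (q : (i : Fin n) → X → (Fin i → X) → (Fin i → Y) → ℝ) (hq : ∀ i xs ys, ∑ a, q i a xs ys = 1)
    (W : Y → X → Y → ℝ) (hW : ∀ a s, ∑ b, W b a s = 1) (s₀ : Y)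
    (ℓ : X → Y → Y → ℝ) (C : ℝ) (hℓ : ∀ a s, ∑ b, W b a s * ℓ a s b = C) (t : ℝ) :
    ∑ x : Fin n → X, ∑ y : Fin n → Y,
      (∏ i, q i (x i) (Fin.take i i.2.le x) (Fin.take i i.2.le y)) *
        (∏ i, W (y i) (x i) (lastD s₀ (Fin.take i i.2.le y))) *
        (t + ∑ i, ℓ (x i) (lastD s₀ (Fin.take i i.2.le y)) (y i)) = t + n * C := by
  rw [sum_sum_pi_eq_sum_pi_prod]
  convert sum_prod_kernel_mul_add_sum
    (fun i h z => q i z.1 (Prod.fst ∘ h) (Prod.snd ∘ h) * W z.2 z.1 (lastD s₀ (Prod.snd ∘ h)))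
    (fun i h z => ℓ z.1 (lastD s₀ (Prod.snd ∘ h)) z.2) C ?_ ?_ t using 2 with z
  · rw [Finset.prod_mul_distrib]; rfl
  · intro i h
    simp only [Fintype.sum_prod_type, ← Finset.mul_sum, hW, mul_one, hq]
  · intro i h
    simp only [Fintype.sum_prod_type, mul_assoc, ← Finset.mul_sum, hℓ, ← Finset.sum_mul, hq,
      one_mul]

theorem mul_logb_div_le {b q r : ℝ} (hb : 1 < b) (hq : 0 ≤ q) (hr : 0 < r) :
    q * logb b (r / q) ≤ (r - q) / log b := by
  have hlogb : 0 < log b := log_pos hb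
  rcases hq.eq_or_lt with rfl | hq
  · simpa using div_nonneg hr.le hlogb.le
  rw [logb, ← mul_div_assoc, div_le_div_iff_of_pos_right hlogb]
  calc q * log (r / q) ≤ q * (r / q - 1) :=
        mul_le_mul_of_nonneg_left (log_le_sub_one_of_pos (div_pos hr hq)) hq.le
    _ = r - q := by field_simp

theorem sum_mul_logb_div_nonpos {ι : Type*} [Fintype ι] {b : ℝ} (hb : 1 < b) (Q R : ι → ℝ)
    (hQ : ∀ i, 0 ≤ Q i) (hR : ∀ i, 0 < R i) (hRQ : ∑ i, R i ≤ ∑ i, Q i) :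
    ∑ i, Q i * logb b (R i / Q i) ≤ 0 :=
  calc ∑ i, Q i * logb b (R i / Q i) ≤ ∑ i, (R i - Q i) / log b :=
        Finset.sum_le_sum fun i _ => mul_logb_div_le hb (hQ i) (hR i)
    _ = (∑ i, R i - ∑ i, Q i) / log b := by rw [← Finset.sum_div, Finset.sum_sub_distrib]
    _ ≤ 0 := div_nonpos_of_nonpos_of_nonneg (by linarith) (log_pos hb).le

theorem sum_sum_mul_logb_div_marginal_le {A B : Type*} [Fintype A] [Fintype B] {b : ℝ}
    (hb : 1 < b) (p v : A → B → ℝ) (hp : ∀ x y, 0 ≤ p x y) (hv : ∀ x y, 0 ≤ v x y)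
    (R : B → ℝ) (hR : ∀ y, 0 < R y) (hRmass : ∑ y, R y ≤ ∑ x, ∑ y, p x y * v x y) :
    ∑ x, ∑ y, p x y * v x y * logb b (v x y / ∑ x', p x' y * v x' y) ≤
      ∑ x, ∑ y, p x y * v x y * logb b (v x y / R y) := by
  set Q : B → ℝ := fun y => ∑ x', p x' y * v x' y
  change ∑ x, ∑ y, p x y * v x y * logb b (v x y / Q y) ≤ _
  have hsplit : ∀ x y, p x y * v x y * logb b (v x y / Q y) =
      p x y * v x y * logb b (v x y / R y) + p x y * v x y * logb b (R y / Q y) := by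
    intro x y
    rcases (mul_nonneg (hp x y) (hv x y)).eq_or_lt with h | h
    · simp [← h]
    have hQ : 0 < Q y := h.trans_le <| Finset.single_le_sum
      (f := fun x' => p x' y * v x' y) (fun x' _ => mul_nonneg (hp x' y) (hv x' y)) (mem_univ x)
    have hv0 : v x y ≠ 0 := right_ne_zero_of_mul h.ne'
    rw [logb_div hv0 hQ.ne', logb_div hv0 (hR y).ne', logb_div (hR y).ne' hQ.ne']
    ring
  have hgibbs : ∑ x, ∑ y, p x y * v x y * logb b (R y / Q y) ≤ 0 := by
    rw [Finset.sum_comm]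
    simp only [← Finset.sum_mul]
    exact sum_mul_logb_div_nonpos hb Q R
      (fun y => Finset.sum_nonneg fun x _ => mul_nonneg (hp x y) (hv x y)) hR
      (by rwa [Finset.sum_comm] at hRmass)
  simp only [hsplit, Finset.sum_add_distrib]
  linarith

-- `c = (postConst α)⁻¹`
noncomputable def postConst (α : ℝ) : ℝ := 1 + (1 - α) * α ^ (α / (1 - α))

noncomputable def postRef (α : ℝ) (s b : Bool) : ℝ :=
  if b = s then (postConst α)⁻¹ else 1 - (postConst α)⁻¹

noncomputable def postOut (α : ℝ) (s₀ : Bool) (n : ℕ) (y : Fin n → Bool) : ℝ :=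
  ∏ i : Fin n, postRef α (lastD s₀ (Fin.take i i.2.le y)) (y i)

section Post

variable {α : ℝ}

theorem postQ_eq_prod (s₀ : Bool) (n : ℕ) (x y : Fin n → Bool) :
    postQ α s₀ n x y = ∏ i : Fin n, postW α (y i) (x i) (lastD s₀ (Fin.take i i.2.le y)) := by
  refine Finset.prod_congr rfl fun i _ => ?_
  unfold lastD
  split_ifs <;> rfl

theorem postW_nonneg (h0 : 0 < α) (h1 : α < 1) (y x s : Bool) : 0 ≤ postW α y x s := by
  unfold postW
  split_ifs <;> linarith

theorem sum_postW (a s : Bool) : ∑ b, postW α b a s = 1 := by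
  cases a <;> cases s <;> simp [postW]

theorem postQ_nonneg (h0 : 0 < α) (h1 : α < 1) (s₀ : Bool) (n : ℕ) (x y : Fin n → Bool) :
    0 ≤ postQ α s₀ n x y :=
  Finset.prod_nonneg fun _ _ => postW_nonneg h0 h1 _ _ _

theorem postConst_pos_sub_one (h0 : 0 < α) (h1 : α < 1) : 0 < postConst α - 1 := by
  have : 0 < 1 - α := by linarith
  unfold postConst
  simpa using mul_pos this (rpow_pos_of_pos h0 _)

theorem one_sub_inv_postConst (h0 : 0 < α) (h1 : α < 1) :
    1 - (postConst α)⁻¹ = (postConst α - 1) * (postConst α)⁻¹ := by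
  have : postConst α ≠ 0 := by linarith [postConst_pos_sub_one h0 h1]
  field_simp

theorem postRef_pos (h0 : 0 < α) (h1 : α < 1) (s b : Bool) : 0 < postRef α s b := by
  have hK := postConst_pos_sub_one h0 h1
  have hc : 0 < (postConst α)⁻¹ := inv_pos.mpr (by linarith)
  unfold postRef
  split_ifs
  · exact hc
  · rw [one_sub_inv_postConst h0 h1]; positivity

theorem sum_postRef (s : Bool) : ∑ b, postRef α s b = 1 := by
  cases s <;> simp [postRef]

theorem sum_postOut (s₀ : Bool) (n : ℕ) : ∑ y, postOut α s₀ n y = 1 := by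
  simpa [postOut] using sum_prod_kernel_mul_add_sum (fun i h b => postRef α (lastD s₀ h) b)
    (fun _ _ _ => 0) 0 (fun _ _ => sum_postRef _) (by simp) 1

theorem postOut_pos (h0 : 0 < α) (h1 : α < 1) (s₀ : Bool) (n : ℕ) (y : Fin n → Bool) :
    0 < postOut α s₀ n y :=
  Finset.prod_pos fun _ _ => postRef_pos h0 h1 _ _

theorem postW_divergence_of_ne (h0 : 0 < α) (h1 : α < 1) :
    (1 - α) * logb 2 ((1 - α) / (1 - (postConst α)⁻¹)) + α * logb 2 (α * postConst α) =
      logb 2 (postConst α) := by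
  have hα : 0 < 1 - α := by linarith
  have hpow : 0 < α ^ (α / (1 - α)) := rpow_pos_of_pos h0 _
  have hK := postConst_pos_sub_one h0 h1
  have hP : 0 < postConst α := by linarith
  have hlogK : log (postConst α - 1) = log (1 - α) + α / (1 - α) * log α := by
    rw [show postConst α - 1 = (1 - α) * α ^ (α / (1 - α)) by unfold postConst; ring,
      log_mul hα.ne' hpow.ne', log_rpow h0]
  have hlog :
      log ((1 - α) / (1 - (postConst α)⁻¹)) = log (postConst α) - α / (1 - α) * log α := by
    rw [one_sub_inv_postConst h0 h1, div_mul_eq_div_div, div_inv_eq_mul,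
      log_mul (div_pos hα hK).ne' hP.ne', log_div hα.ne' hK.ne', hlogK]
    ring
  simp only [logb, ← mul_div_assoc, ← add_div, hlog, log_mul h0.ne' hP.ne']
  field_simp
  ring

theorem sum_postW_mul_logb_div_postRef (h0 : 0 < α) (h1 : α < 1) (a s : Bool) :
    ∑ b, postW α b a s * logb 2 (postW α b a s / postRef α s b) = logb 2 (postConst α) := by
  have key := postW_divergence_of_ne h0 h1
  rw [Fintype.sum_bool]
  cases a <;> cases s <;>
    simp only [postW, postRef, Bool.true_eq_false, Bool.false_eq_true, ↓reduceIte, div_inv_eq_mul,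
      zero_div, logb_zero, mul_zero, one_mul, zero_add, add_zero] <;>
    linarith

theorem postQ_mul_logb_div_postOut (h0 : 0 < α) (h1 : α < 1) (s₀ : Bool) (n : ℕ)
    (x y : Fin n → Bool) :
    postQ α s₀ n x y * logb 2 (postQ α s₀ n x y / postOut α s₀ n y) =
      postQ α s₀ n x y * ∑ i, logb 2 (postW α (y i) (x i) (lastD s₀ (Fin.take i i.2.le y)) /
        postRef α (lastD s₀ (Fin.take i i.2.le y)) (y i)) := by
  rcases eq_or_ne (postQ α s₀ n x y) 0 with hQ | hQ
  · rw [hQ, zero_mul, zero_mul]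
  rw [postQ_eq_prod] at hQ ⊢
  rw [postOut, ← Finset.prod_div_distrib, logb_prod]
  exact fun i _ => div_ne_zero (Finset.prod_ne_zero_iff.mp hQ i (mem_univ i))
    (postRef_pos h0 h1 _ _).ne'

end Post

theorem stmt_5_general (α : ℝ) (h0 : 0 < α) (h1 : α < 1) (s₀ : Bool) (n : ℕ)
    (p : (Fin n → Bool) → (Fin (n - 1) → Bool) → ℝ) (hp : IsCausalCond n p) :
    dirInfo2 n p (postQ α s₀ n) ≤
      -(n : ℝ) * Real.logb 2 ((1 + (1 - α) * α ^ (α / (1 - α)))⁻¹) := by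
  obtain ⟨q, hq0, hq1, hpq⟩ := hp
  have hp_eq : ∀ x y, p x (pref n y) =
      ∏ i, q i (x i) (Fin.take i i.2.le x) (Fin.take i i.2.le y) := fun x y => hpq x (pref n y)
  have hchain := sum_sum_causal_mul_add_sum q hq1 (postW α) sum_postW s₀
  have hmass : ∑ x, ∑ y, p x (pref n y) * postQ α s₀ n x y = 1 := by
    simpa [hp_eq, postQ_eq_prod] using hchain (fun _ _ _ => 0) 0 (by simp) 1
  have hscore : ∑ x, ∑ y, p x (pref n y) * postQ α s₀ n x y *
      logb 2 (postQ α s₀ n x y / postOut α s₀ n y) = n * logb 2 (postConst α) := by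
    rw [← zero_add (_ * _), ← hchain _ _ (sum_postW_mul_logb_div_postRef h0 h1) 0]
    refine Finset.sum_congr rfl fun x _ => Finset.sum_congr rfl fun y _ => ?_
    rw [mul_assoc, postQ_mul_logb_div_postOut h0 h1, hp_eq, postQ_eq_prod, zero_add, mul_assoc]
  calc dirInfo2 n p (postQ α s₀ n)
      ≤ ∑ x, ∑ y, p x (pref n y) * postQ α s₀ n x y *
          logb 2 (postQ α s₀ n x y / postOut α s₀ n y) :=
        sum_sum_mul_logb_div_marginal_le one_lt_two (fun x y => p x (pref n y)) (postQ α s₀ n)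
          (fun x y => hp_eq x y ▸ Finset.prod_nonneg fun _ _ => hq0 _ _ _ _)
          (postQ_nonneg h0 h1 s₀ n) (postOut α s₀ n) (postOut_pos h0 h1 s₀ n)
          (by rw [sum_postOut, hmass])
    _ = n * logb 2 (postConst α) := hscore
    _ = -(n : ℝ) * logb 2 (postConst α)⁻¹ := by rw [logb_inv]; ring

/-- **Feedback capacity of the POST(α) channel, converse part.**  For `α ∈ (0,1)`,
`c = (1 + ᾱ·α^(α/ᾱ))⁻¹`, any initial state `s₀`, any `n ≥ 1` and any causal
conditioning pmf `p(xⁿ‖yⁿ⁻¹)`, the directed information through the POST(α) channel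
satisfies `I(Xⁿ → Yⁿ) ≤ -n·log₂ c`. -/
theorem stmt_5 (α : ℝ) (h0 : 0 < α) (h1 : α < 1) (s₀ : Bool) (n : ℕ) (hn : 1 ≤ n)
    (p : (Fin n → Bool) → (Fin (n - 1) → Bool) → ℝ) (hp : IsCausalCond n p) :
    dirInfo2 n p (postQ α s₀ n) ≤
      -(n : ℝ) * Real.logb 2 ((1 + (1 - α) * α ^ (α / (1 - α)))⁻¹) :=
  stmt_5_general α h0 h1 s₀ n p hp
end

section
/- Fix α ∈ (0,1), let ᾱ = 1-α and c = (1 + ᾱ·α^{α/ᾱ})^{-1}, and fix an initial state s₀ ∈ {0,1}. For the POST(α) channel with channel causal conditioning q_{s₀}, and for every n ≥ 1, the maximum of the directed information I(X^n → Y^n) over pmfs on {0,1}^n (inputs not depending on the outputs, i.e., the nonfeedback problem) equals the maximum of I(X^n → Y^n) over all causal conditioning pmfs p(x^n‖y^{n-1}) (the feedback problem), and both maxima equal -n·log₂ c. In particular, feedback does not increase the capacity of the POST(α) channel. -/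
open Finset

/-!
The Markov chain `Q*` on outputs that repeats the previous output with probability `c` is
equidistant from every input letter: `D(W(·|a,s) ‖ Q*(·|s)) = -log₂ c` for each input `a` and
state `s`. By the chain rule, for any input law, with or without feedback,
`E[log₂ q(Yⁿ‖Xⁿ)/Q*(Yⁿ)] = -n log₂ c`, and the directed information falls short of this by the
divergence `D(P_Y ‖ Q*) ≥ 0`. Equality needs `P_Y = Q*`, which a nonfeedback input achieves:
inverting the channel letter by letter gives a law `R` on `{0,1}ⁿ` with output `Q*`, and `R > 0`
because `κ R(¬s) ≤ R(s)` is preserved for a root `κ ∈ (0,1]` of `p κ² - c κ + p α`, where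
`p = (1 - c)/(1 - α)`.
-/

open Real

namespace PostChannel

section Chain

def prevOut (s₀ : Bool) {n : ℕ} (y : Fin n → Bool) (i : Fin n) : Bool :=
  if i.1 = 0 then s₀ else y ⟨i.1 - 1, by omega⟩

def chainProb (K : Bool → Bool → Bool → ℝ) (s₀ : Bool) (n : ℕ) (x y : Fin n → Bool) : ℝ :=
  ∏ i, K (y i) (x i) (prevOut s₀ y i)

def markovProb (Q : Bool → Bool → ℝ) (s₀ : Bool) (n : ℕ) (y : Fin n → Bool) : ℝ :=
  ∏ i, Q (y i) (prevOut s₀ y i)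

variable {n : ℕ}

lemma prevOut_cons_succ (s₀ b : Bool) (y : Fin n → Bool) (i : Fin n) :
    prevOut s₀ (Fin.cons b y : Fin (n + 1) → Bool) i.succ = prevOut b y i := by
  rcases i with ⟨_ | k, hk⟩
  · rfl
  · exact Fin.cons_succ (α := fun _ => Bool) b y ⟨k, by omega⟩

lemma chainProb_cons (K : Bool → Bool → Bool → ℝ) (s₀ a b : Bool) (x y : Fin n → Bool) :
    chainProb K s₀ (n + 1) (Fin.cons a x) (Fin.cons b y) = K b a s₀ * chainProb K b n x y := by
  simp only [chainProb, Fin.prod_univ_succ, Fin.cons_zero, Fin.cons_succ, prevOut_cons_succ]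
  rfl

lemma markovProb_cons (Q : Bool → Bool → ℝ) (s₀ b : Bool) (y : Fin n → Bool) :
    markovProb Q s₀ (n + 1) (Fin.cons b y) = Q b s₀ * markovProb Q b n y := by
  simp only [markovProb, Fin.prod_univ_succ, Fin.cons_zero, Fin.cons_succ, prevOut_cons_succ]
  rfl

lemma sum_cons (f : (Fin (n + 1) → Bool) → ℝ) : ∑ x, f x = ∑ a, ∑ x, f (Fin.cons a x) := by
  rw [← (Fin.consEquiv fun _ => Bool).sum_comp, Fintype.sum_prod_type]
  rfl

lemma sum_bool_eq_add_not (f : Bool → ℝ) (s : Bool) : ∑ b, f b = f s + f (!s) := by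
  cases s <;> simp [add_comm]

lemma sum_sum_cons (f : (Fin (n + 1) → Bool) → (Fin (n + 1) → Bool) → ℝ) :
    ∑ x, ∑ y, f x y = ∑ a, ∑ b, ∑ x, ∑ y, f (Fin.cons a x) (Fin.cons b y) := by
  simp only [sum_cons (f := fun y => f _ y)]
  rw [sum_cons]
  exact Finset.sum_congr rfl fun a _ => Finset.sum_comm

lemma sum_markovProb (Q : Bool → Bool → ℝ) (hQ : ∀ s, ∑ b, Q b s = 1) :
    ∀ (n : ℕ) (s₀ : Bool), ∑ y, markovProb Q s₀ n y = 1
  | 0, _ => by simp [markovProb]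
  | n + 1, s₀ => by
    simp only [sum_cons, markovProb_cons, ← Finset.mul_sum, sum_markovProb Q hQ n, mul_one, hQ]

end Chain

section Feedback

abbrev FeedbackKernel (n : ℕ) : Type :=
  (i : Fin n) → Bool → (Fin i.1 → Bool) → (Fin i.1 → Bool) → ℝ

def prefixOf {n : ℕ} (x : Fin n → Bool) (i : Fin n) : Fin i.1 → Bool :=
  fun j => x ⟨j.1, by omega⟩

def feedbackProb {n : ℕ} (F : FeedbackKernel n) (x y : Fin n → Bool) : ℝ :=
  ∏ i, F i (x i) (prefixOf x i) (prefixOf y i)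

variable {n : ℕ}

def FeedbackKernel.first (F : FeedbackKernel (n + 1)) (a : Bool) : ℝ :=
  F 0 a Fin.elim0 Fin.elim0

def FeedbackKernel.tail (F : FeedbackKernel (n + 1)) (a b : Bool) : FeedbackKernel n :=
  fun i xi xs ys => F i.succ xi (Fin.cons a xs) (Fin.cons b ys)

def FeedbackKernel.IsNormalized (F : FeedbackKernel n) : Prop :=
  ∀ i xs ys, ∑ xi, F i xi xs ys = 1

lemma FeedbackKernel.IsNormalized.tail {F : FeedbackKernel (n + 1)} (hF : F.IsNormalized)
    (a b : Bool) : (F.tail a b).IsNormalized :=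
  fun i _ _ => hF i.succ _ _

lemma FeedbackKernel.IsNormalized.sum_first {F : FeedbackKernel (n + 1)} (hF : F.IsNormalized) :
    ∑ a, F.first a = 1 :=
  hF 0 _ _

lemma prefixOf_cons_succ (a : Bool) (x : Fin n → Bool) (i : Fin n) :
    prefixOf (Fin.cons a x : Fin (n + 1) → Bool) i.succ = Fin.cons a (prefixOf x i) := by
  funext ⟨j, hj⟩
  rcases j with _ | k
  · rfl
  · exact (Fin.cons_succ (α := fun _ => Bool) a x ⟨k, by simp at hj; omega⟩).trans
      (Fin.cons_succ (α := fun _ => Bool) a (prefixOf x i) ⟨k, by simp at hj; omega⟩).symm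

lemma feedbackProb_cons (F : FeedbackKernel (n + 1)) (a b : Bool) (x y : Fin n → Bool) :
    feedbackProb F (Fin.cons a x) (Fin.cons b y) = F.first a * feedbackProb (F.tail a b) x y := by
  rw [feedbackProb, Fin.prod_univ_succ, Fin.cons_zero]
  congr 1
  · exact congrArg₂ (F 0 a) (funext fun j => j.elim0) (funext fun j => j.elim0)
  · simp only [Fin.cons_succ, prefixOf_cons_succ]
    rfl

end Feedback

lemma mul_mul_logb_mul_sub (w q u v : ℝ) (hu : u ≠ 0) (hv : v ≠ 0) :
    w * q * (logb 2 (w * q) - logb 2 (u * v))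
      = w * (logb 2 w - logb 2 u) * q + w * (q * (logb 2 q - logb 2 v)) := by
  rcases eq_or_ne w 0 with rfl | hw
  · simp
  rcases eq_or_ne q 0 with rfl | hq
  · simp
  rw [logb_mul hw hq, logb_mul hu hv]
  ring

section ChainRule

variable (K : Bool → Bool → Bool → ℝ)

lemma sum_feedbackProb_mul_chainProb (hK : ∀ a s, ∑ b, K b a s = 1) :
    ∀ {n : ℕ} (F : FeedbackKernel n), F.IsNormalized →
      ∀ s₀, ∑ x, ∑ y, feedbackProb F x y * chainProb K s₀ n x y = 1
  | 0, _, _, _ => by simp [feedbackProb, chainProb]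
  | n + 1, F, hF, s₀ => by
    have inner : ∀ a b, ∑ x, ∑ y, F.first a * feedbackProb (F.tail a b) x y *
        (K b a s₀ * chainProb K b n x y) = F.first a * K b a s₀ := fun a b => by
      simp_rw [mul_mul_mul_comm _ _ (K b a s₀), ← Finset.mul_sum,
        sum_feedbackProb_mul_chainProb hK (F.tail a b) (hF.tail a b) b, mul_one]
    simp only [sum_sum_cons, feedbackProb_cons, chainProb_cons, inner, ← Finset.mul_sum, hK,
      mul_one, hF.sum_first]

lemma sum_feedbackProb_mul_chainProb_mul_logb (hK : ∀ a s, ∑ b, K b a s = 1)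
    (Q : Bool → Bool → ℝ) (hQ : ∀ b s, Q b s ≠ 0) (C : ℝ)
    (hD : ∀ a s, ∑ b, K b a s * (logb 2 (K b a s) - logb 2 (Q b s)) = C) :
    ∀ {n : ℕ} (F : FeedbackKernel n), F.IsNormalized → ∀ s₀,
      ∑ x, ∑ y, feedbackProb F x y * chainProb K s₀ n x y *
        (logb 2 (chainProb K s₀ n x y) - logb 2 (markovProb Q s₀ n y)) = n * C
  | 0, _, _, _ => by simp [feedbackProb, chainProb, markovProb]
  | n + 1, F, hF, s₀ => by
    have hM : ∀ b y, markovProb Q b n y ≠ 0 := fun b y =>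
      Finset.prod_ne_zero_iff.mpr fun i _ => hQ _ _
    have inner : ∀ a b, ∑ x, ∑ y, F.first a * feedbackProb (F.tail a b) x y *
        (K b a s₀ * chainProb K b n x y) *
        (logb 2 (K b a s₀ * chainProb K b n x y) - logb 2 (Q b s₀ * markovProb Q b n y))
        = F.first a * (K b a s₀ * (logb 2 (K b a s₀) - logb 2 (Q b s₀)))
          + F.first a * K b a s₀ * (n * C) := fun a b => by
      rw [← mul_one (F.first a * _),
        ← sum_feedbackProb_mul_chainProb K hK (F.tail a b) (hF.tail a b) b,
        ← sum_feedbackProb_mul_chainProb_mul_logb hK Q hQ C hD (F.tail a b) (hF.tail a b) b]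
      simp_rw [Finset.mul_sum, ← Finset.sum_add_distrib]
      refine Finset.sum_congr rfl fun x _ => Finset.sum_congr rfl fun y _ => ?_
      rw [mul_assoc, mul_mul_logb_mul_sub _ _ _ _ (hQ b s₀) (hM b y)]
      ring
    simp only [sum_sum_cons, feedbackProb_cons, chainProb_cons, markovProb_cons, inner,
      Finset.sum_add_distrib, ← Finset.mul_sum, hD, hK, ← Finset.sum_mul, hF.sum_first]
    push_cast
    ring

end ChainRule

section PointKernel

variable {n : ℕ}

def pointKernel (x : Fin n → Bool) : FeedbackKernel n :=
  fun i xi _ _ => if xi = x i then 1 else 0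

lemma pointKernel_isNormalized (x : Fin n → Bool) : (pointKernel x).IsNormalized :=
  fun i _ _ => by simp [pointKernel]

lemma sum_sum_feedbackProb_pointKernel_mul (x : Fin n → Bool)
    (G : (Fin n → Bool) → (Fin n → Bool) → ℝ) :
    ∑ x', ∑ y, feedbackProb (pointKernel x) x' y * G x' y = ∑ y, G x y := by
  have h : ∀ x' y, feedbackProb (pointKernel x) x' y = if x' = x then 1 else 0 := fun x' y => by
    simp [feedbackProb, pointKernel, Finset.prod_boole, funext_iff]
  simp [h]

end PointKernel

lemma sum_mul_logb_sub_nonpos {ι : Type*} (s : Finset ι) (p M : ι → ℝ)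
    (hp : ∀ i ∈ s, 0 ≤ p i) (hM : ∀ i ∈ s, 0 < M i) (hsum : ∑ i ∈ s, M i ≤ ∑ i ∈ s, p i) :
    ∑ i ∈ s, p i * (logb 2 (M i) - logb 2 (p i)) ≤ 0 := by
  have hterm : ∀ i ∈ s, p i * (logb 2 (M i) - logb 2 (p i)) ≤ (M i - p i) / log 2 := by
    intro i hi
    rcases (hp i hi).eq_or_lt with h | h
    · rw [← h, zero_mul, sub_zero]; exact div_nonneg (hM i hi).le (log_pos one_lt_two).le
    · rw [← logb_div (hM i hi).ne' h.ne', logb, ← mul_div_assoc]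
      gcongr
      have := log_le_sub_one_of_pos (div_pos (hM i hi) h)
      calc p i * log (M i / p i) ≤ p i * (M i / p i - 1) := by gcongr
        _ = M i - p i := by field_simp
  calc ∑ i ∈ s, p i * (logb 2 (M i) - logb 2 (p i)) ≤ ∑ i ∈ s, (M i - p i) / log 2 :=
        Finset.sum_le_sum hterm
    _ ≤ 0 := by
      rw [← Finset.sum_div, Finset.sum_sub_distrib]
      exact div_nonpos_of_nonpos_of_nonneg (by linarith) (log_pos one_lt_two).le

section DirectedInformation

variable {n : ℕ} (p : (Fin n → Bool) → (Fin (n - 1) → Bool) → ℝ)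
  (q : (Fin n → Bool) → (Fin n → Bool) → ℝ) (M : (Fin n → Bool) → ℝ)

lemma dirInfo2_eq_of_output_eq (hout : ∀ y, ∑ x, p x (pref n y) * q x y = M y) (hM : ∀ y, M y ≠ 0) :
    dirInfo2 n p q = ∑ x, ∑ y, p x (pref n y) * q x y * (logb 2 (q x y) - logb 2 (M y)) := by
  refine Finset.sum_congr rfl fun x _ => Finset.sum_congr rfl fun y _ => ?_
  rcases eq_or_ne (q x y) 0 with h | h
  · simp [h]
  · rw [hout, logb_div h (hM y)]

lemma dirInfo2_le_of_reference (hp : ∀ x y, 0 ≤ p x (pref n y)) (hq : ∀ x y, 0 ≤ q x y)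
    (hM : ∀ y, 0 < M y) (hmass : ∑ y, M y ≤ ∑ x, ∑ y, p x (pref n y) * q x y) :
    dirInfo2 n p q ≤ ∑ x, ∑ y, p x (pref n y) * q x y * (logb 2 (q x y) - logb 2 (M y)) := by
  set PY := fun y => ∑ x, p x (pref n y) * q x y
  have hPq : ∀ x y, 0 ≤ p x (pref n y) * q x y := fun x y => mul_nonneg (hp x y) (hq x y)
  have hsplit : ∀ x y, p x (pref n y) * q x y * logb 2 (q x y / PY y)
      = p x (pref n y) * q x y * (logb 2 (q x y) - logb 2 (M y))
        + p x (pref n y) * q x y * (logb 2 (M y) - logb 2 (PY y)) := fun x y => by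
    rcases (hPq x y).eq_or_lt with h | h
    · simp [← h]
    have hPY : 0 < PY y := h.trans_le
      (Finset.single_le_sum (fun x _ => hPq x y) (Finset.mem_univ x))
    rw [logb_div (pos_of_mul_pos_right h (hp x y)).ne' hPY.ne']
    ring
  have gibbs : ∑ y, PY y * (logb 2 (M y) - logb 2 (PY y)) ≤ 0 :=
    sum_mul_logb_sub_nonpos _ PY M (fun y _ => Finset.sum_nonneg fun x _ => hPq x y)
      (fun y _ => hM y) (by rwa [Finset.sum_comm] at hmass)
  calc dirInfo2 n p q
      = ∑ x, ∑ y, (p x (pref n y) * q x y * (logb 2 (q x y) - logb 2 (M y))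
          + p x (pref n y) * q x y * (logb 2 (M y) - logb 2 (PY y))) :=
        Finset.sum_congr rfl fun x _ => Finset.sum_congr rfl fun y _ => hsplit x y
    _ = ∑ x, ∑ y, p x (pref n y) * q x y * (logb 2 (q x y) - logb 2 (M y))
          + ∑ y, PY y * (logb 2 (M y) - logb 2 (PY y)) := by
        simp only [Finset.sum_add_distrib, PY, Finset.sum_mul]
        exact congrArg _ Finset.sum_comm
    _ ≤ _ := by linarith

end DirectedInformation

section Marginals

variable (m : (k : ℕ) → (Fin k → Bool) → ℝ)

lemma prod_marginal_ratio (hm : ∀ k x, m k x ≠ 0) (h0 : ∀ x, m 0 x = 1) :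
    ∀ (n : ℕ) (x : Fin n → Bool),
      ∏ i : Fin n, m (i.1 + 1) (Fin.snoc (prefixOf x i) (x i)) / m i.1 (prefixOf x i) = m n x
  | 0, x => by simp [h0]
  | n + 1, x => by
    have hinit : ∏ i : Fin n, m (i.castSucc.1 + 1) (Fin.snoc (prefixOf x i.castSucc) (x i.castSucc))
        / m i.castSucc.1 (prefixOf x i.castSucc) = m n (Fin.init x) :=
      prod_marginal_ratio hm h0 n (Fin.init x)
    rw [Fin.prod_univ_castSucc, hinit]
    change m n (Fin.init x) * (m (n + 1) (Fin.snoc (Fin.init x) (x (Fin.last n)))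
      / m n (Fin.init x)) = _
    rw [Fin.snoc_init_self, mul_div_cancel₀ _ (hm _ _)]

lemma isCausalCond_of_marginals (hm : ∀ k x, 0 < m k x) (h0 : ∀ x, m 0 x = 1)
    (hsnoc : ∀ k xs, ∑ b, m (k + 1) (Fin.snoc xs b) = m k xs) (n : ℕ) :
    IsCausalCond n (fun x _ => m n x) := by
  refine ⟨fun i xi xs _ => m (i.1 + 1) (Fin.snoc xs xi) / m i.1 xs,
    fun i _ _ _ => div_nonneg (hm _ _).le (hm _ _).le, fun i xs _ => ?_, fun x _ => ?_⟩
  · rw [← Finset.sum_div, hsnoc, div_self (hm _ _).ne']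
  · exact (prod_marginal_ratio m (fun k x => (hm k x).ne') h0 n x).symm

end Marginals

noncomputable def postA (α : ℝ) : ℝ := α ^ (α / (1 - α))

noncomputable def postC (α : ℝ) : ℝ := (1 + (1 - α) * postA α)⁻¹

noncomputable def postP (α : ℝ) : ℝ := postA α * postC α

noncomputable def outKernel (α : ℝ) (b s : Bool) : ℝ := if b = s then postC α else 1 - postC α

section Constants

variable {α : ℝ}

lemma postA_pos (h0 : 0 < α) : 0 < postA α := rpow_pos_of_pos h0 _

lemma postC_pos (h0 : 0 < α) (h1 : α < 1) : 0 < postC α := by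
  have := postA_pos h0
  have : 0 < 1 - α := by linarith
  unfold postC; positivity

lemma postC_lt_one (h0 : 0 < α) (h1 : α < 1) : postC α < 1 := by
  have := postA_pos h0
  rw [postC, inv_lt_one_iff₀]
  right; nlinarith

lemma postP_pos (h0 : 0 < α) (h1 : α < 1) : 0 < postP α :=
  mul_pos (postA_pos h0) (postC_pos h0 h1)

lemma one_sub_postC (h0 : 0 < α) (h1 : α < 1) : 1 - postC α = (1 - α) * postP α := by
  have : 1 + (1 - α) * postA α ≠ 0 := (inv_pos.mp (postC_pos h0 h1)).ne'
  rw [postP, postC]; field_simp; ring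

lemma logb_one_sub_postC (h0 : 0 < α) (h1 : α < 1) :
    logb 2 (1 - postC α) = logb 2 (1 - α) + α / (1 - α) * logb 2 α + logb 2 (postC α) := by
  rw [one_sub_postC h0 h1, logb_mul (by linarith) (postP_pos h0 h1).ne', postP,
    logb_mul (postA_pos h0).ne' (postC_pos h0 h1).ne', postA, logb_rpow_eq_mul_logb_of_pos h0,
    add_assoc]

lemma postA_mul_one_add_le (h0 : 0 < α) (h1 : α < 1) : postA α * (1 + α) ≤ 1 := by
  have hlogα : log α ≤ α - 1 := log_le_sub_one_of_pos h0
  have hlog1α : log (1 + α) ≤ α := by linarith [log_le_sub_one_of_pos (by linarith : 0 < 1 + α)]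
  have hexp : α / (1 - α) * log α ≤ -α := by
    calc α / (1 - α) * log α ≤ α / (1 - α) * (α - 1) :=
          mul_le_mul_of_nonneg_left hlogα (div_nonneg h0.le (by linarith))
      _ = -α := by field_simp [(by linarith : 1 - α ≠ 0)]; ring
  rw [← log_nonpos_iff (by have := postA_pos h0; positivity),
    log_mul (postA_pos h0).ne' (by linarith), postA, log_rpow h0]
  linarith

lemma exists_quadratic_root_mem_Ioc (h0 : 0 < α) (h1 : α < 1) :
    ∃ κ, 0 < κ ∧ κ ≤ 1 ∧ postC α * κ = postP α * κ ^ 2 + postP α * α := by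
  set f : ℝ → ℝ := fun κ => postP α * κ ^ 2 + postP α * α - postC α * κ
  have hf0 : 0 < f 0 := by simp [f, mul_pos (postP_pos h0 h1) h0]
  have hf1 : f 1 ≤ 0 := by
    have := mul_le_mul_of_nonneg_right (postA_mul_one_add_le h0 h1) (postC_pos h0 h1).le
    simp only [f, postP] at this ⊢; nlinarith
  obtain ⟨κ, ⟨hκ0, hκ1⟩, hκ⟩ :=
    intermediate_value_Icc' zero_le_one (by fun_prop : Continuous f).continuousOn ⟨hf1, hf0.le⟩
  refine ⟨κ, lt_of_le_of_ne hκ0 ?_, hκ1, by simp only [f] at hκ; linarith⟩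
  rintro rfl; exact hf0.ne' hκ

end Constants

lemma sum_postW (α : ℝ) (a s : Bool) : ∑ b, postW α b a s = 1 := by
  cases a <;> cases s <;> simp [postW]

lemma sum_outKernel (α : ℝ) (s : Bool) : ∑ b, outKernel α b s = 1 := by
  cases s <;> simp [outKernel]

lemma postW_nonneg {α : ℝ} (h0 : 0 < α) (h1 : α < 1) (b a s : Bool) : 0 ≤ postW α b a s := by
  unfold postW; split_ifs <;> linarith

lemma outKernel_pos {α : ℝ} (h0 : 0 < α) (h1 : α < 1) (b s : Bool) : 0 < outKernel α b s := by
  have := postC_pos h0 h1; have := postC_lt_one h0 h1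
  unfold outKernel; split_ifs <;> linarith

lemma sum_postW_mul_logb_sub {α : ℝ} (h0 : 0 < α) (h1 : α < 1) (a s : Bool) :
    ∑ b, postW α b a s * (logb 2 (postW α b a s) - logb 2 (outKernel α b s))
      = -logb 2 (postC α) := by
  have h1α : 1 - α ≠ 0 := by linarith
  cases a <;> cases s <;>
    simp [postW, outKernel, logb_one_sub_postC h0 h1] <;>
    field_simp <;> ring

section Post

variable {α : ℝ} {n : ℕ}

lemma postQ_cons (s₀ a b : Bool) (x y : Fin n → Bool) :
    postQ α s₀ (n + 1) (Fin.cons a x) (Fin.cons b y) = postW α b a s₀ * postQ α b n x y :=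
  chainProb_cons (postW α) s₀ a b x y

lemma postQ_nonneg (h0 : 0 < α) (h1 : α < 1) (s₀ : Bool) (x y : Fin n → Bool) :
    0 ≤ postQ α s₀ n x y :=
  Finset.prod_nonneg fun _ _ => postW_nonneg h0 h1 _ _ _

lemma markovProb_outKernel_pos (h0 : 0 < α) (h1 : α < 1) (s₀ : Bool) (y : Fin n → Bool) :
    0 < markovProb (outKernel α) s₀ n y :=
  Finset.prod_pos fun _ _ => outKernel_pos h0 h1 _ _

lemma sum_feedbackProb_mul_postQ {F : FeedbackKernel n} (hF : F.IsNormalized) (s₀ : Bool) :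
    ∑ x, ∑ y, feedbackProb F x y * postQ α s₀ n x y = 1 :=
  sum_feedbackProb_mul_chainProb (postW α) (sum_postW α) F hF s₀

lemma sum_feedbackProb_mul_postQ_mul_logb (h0 : 0 < α) (h1 : α < 1) {F : FeedbackKernel n}
    (hF : F.IsNormalized) (s₀ : Bool) :
    ∑ x, ∑ y, feedbackProb F x y * postQ α s₀ n x y *
      (logb 2 (postQ α s₀ n x y) - logb 2 (markovProb (outKernel α) s₀ n y))
      = n * -logb 2 (postC α) :=
  sum_feedbackProb_mul_chainProb_mul_logb (postW α) (sum_postW α) (outKernel α)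
    (fun b s => (outKernel_pos h0 h1 b s).ne') _ (sum_postW_mul_logb_sub h0 h1) F hF s₀

lemma sum_postQ (s₀ : Bool) (x : Fin n → Bool) : ∑ y, postQ α s₀ n x y = 1 :=
  (sum_sum_feedbackProb_pointKernel_mul x (postQ α s₀ n)).symm.trans
    (sum_feedbackProb_mul_postQ (pointKernel_isNormalized x) s₀)

lemma sum_postQ_mul_logb (h0 : 0 < α) (h1 : α < 1) (s₀ : Bool) (x : Fin n → Bool) :
    ∑ y, postQ α s₀ n x y *
      (logb 2 (postQ α s₀ n x y) - logb 2 (markovProb (outKernel α) s₀ n y))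
      = n * -logb 2 (postC α) :=
  (sum_sum_feedbackProb_pointKernel_mul x fun x y => postQ α s₀ n x y *
      (logb 2 (postQ α s₀ n x y) - logb 2 (markovProb (outKernel α) s₀ n y))).symm.trans <| by
    simpa only [mul_assoc] using
      sum_feedbackProb_mul_postQ_mul_logb h0 h1 (pointKernel_isNormalized x) s₀

variable {r : (Fin n → Bool) → ℝ}

lemma sum_pmf_mul_postQ (hr : ∑ x, r x = 1) (s₀ : Bool) :
    ∑ x, ∑ y, r x * postQ α s₀ n x y = 1 := by
  simp only [← Finset.mul_sum, sum_postQ, mul_one, hr]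

lemma sum_pmf_mul_postQ_mul_logb (h0 : 0 < α) (h1 : α < 1) (hr : ∑ x, r x = 1) (s₀ : Bool) :
    ∑ x, ∑ y, r x * postQ α s₀ n x y *
      (logb 2 (postQ α s₀ n x y) - logb 2 (markovProb (outKernel α) s₀ n y))
      = n * -logb 2 (postC α) := by
  simp only [mul_assoc, ← Finset.mul_sum, sum_postQ_mul_logb h0 h1, ← Finset.sum_mul, hr, one_mul]

lemma dirInfo2_pmf_le (h0 : 0 < α) (h1 : α < 1) (hr0 : ∀ x, 0 ≤ r x) (hr : ∑ x, r x = 1)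
    (s₀ : Bool) : dirInfo2 n (fun x _ => r x) (postQ α s₀ n) ≤ n * -logb 2 (postC α) :=
  (dirInfo2_le_of_reference _ _ _ (fun x _ => hr0 x) (postQ_nonneg h0 h1 s₀)
    (markovProb_outKernel_pos h0 h1 s₀)
    (by rw [sum_markovProb _ (sum_outKernel α), sum_pmf_mul_postQ hr])).trans_eq
    (sum_pmf_mul_postQ_mul_logb h0 h1 hr s₀)

lemma dirInfo2_le_of_isCausalCond (h0 : 0 < α) (h1 : α < 1)
    {p : (Fin n → Bool) → (Fin (n - 1) → Bool) → ℝ} (hp : IsCausalCond n p) (s₀ : Bool) :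
    dirInfo2 n p (postQ α s₀ n) ≤ n * -logb 2 (postC α) := by
  obtain ⟨F, hF0, hF1, hpF⟩ := hp
  have hpF' : ∀ x y, p x (pref n y) = feedbackProb F x y := fun x y => hpF x (pref n y)
  refine (dirInfo2_le_of_reference _ _ _ (fun x y => ?_) (postQ_nonneg h0 h1 s₀)
    (markovProb_outKernel_pos h0 h1 s₀) ?_).trans_eq ?_
  · rw [hpF']; exact Finset.prod_nonneg fun _ _ => hF0 _ _ _ _
  · simp only [hpF', sum_markovProb _ (sum_outKernel α), sum_feedbackProb_mul_postQ hF1, le_refl]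
  · simp only [hpF', sum_feedbackProb_mul_postQ_mul_logb h0 h1 hF1]

end Post

section InputLaw

variable {α : ℝ}

/-- Obtained by inverting the channel letter by letter: from state `s`, the input law whose
output is the Markov chain `markovProb (outKernel α) s`. -/
noncomputable def inputLaw (α : ℝ) : Bool → (n : ℕ) → (Fin n → Bool) → ℝ
  | _, 0, _ => 1
  | s, n + 1, x =>
    if x 0 = s then
      postC α * inputLaw α s n (Fin.tail x) - postP α * α * inputLaw α (!s) n (Fin.tail x)
    else postP α * inputLaw α (!s) n (Fin.tail x)

lemma inputLaw_cons (s a : Bool) (n : ℕ) (x : Fin n → Bool) :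
    inputLaw α s (n + 1) (Fin.cons a x) =
      if a = s then postC α * inputLaw α s n x - postP α * α * inputLaw α (!s) n x
      else postP α * inputLaw α (!s) n x := by
  simp only [inputLaw, Fin.cons_zero, Fin.tail_cons]

lemma inputLaw_pos_and_ratio (h0 : 0 < α) (h1 : α < 1) {κ : ℝ} (hκ0 : 0 < κ) (hκ1 : κ ≤ 1)
    (hκ : postC α * κ = postP α * κ ^ 2 + postP α * α) :
    ∀ (n : ℕ) (s : Bool) (x : Fin n → Bool),
      0 < inputLaw α s n x ∧ κ * inputLaw α (!s) n x ≤ inputLaw α s n x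
  | 0, _, _ => ⟨one_pos, by simpa [inputLaw] using hκ1⟩
  | n + 1, s, x => by
    obtain ⟨a, x, rfl⟩ : ∃ a x', x = Fin.cons a x' := ⟨_, _, (Fin.cons_self_tail x).symm⟩
    obtain ⟨hA, hBA⟩ := inputLaw_pos_and_ratio h0 h1 hκ0 hκ1 hκ n s x
    obtain ⟨hB, hAB⟩ := inputLaw_pos_and_ratio h0 h1 hκ0 hκ1 hκ n (!s) x
    rw [Bool.not_not] at hAB
    set A := inputLaw α s n x
    set B := inputLaw α (!s) n x
    have hp := postP_pos h0 h1
    rw [inputLaw_cons, inputLaw_cons, Bool.not_not]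
    rcases Bool.eq_or_eq_not a s with rfl | rfl
    · simp only [Bool.eq_not_self, if_true, if_false]
      have hκc : κ * ((postC α - κ * postP α) * A - postP α * α * B)
          = postP α * α * (A - κ * B) := by linear_combination A * hκ
      have key : 0 ≤ (postC α - κ * postP α) * A - postP α * α * B :=
        (mul_nonneg_iff_of_pos_left hκ0).mp (hκc ▸ by have := mul_pos hp h0; nlinarith)
      have hR : κ * (postP α * A) ≤ postC α * A - postP α * α * B := by linarith
      exact ⟨(mul_pos hκ0 (mul_pos hp hA)).trans_le hR, hR⟩
    · simp only [Bool.not_eq_self, if_true, if_false]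
      have : postP α * B - κ * (postC α * B - postP α * α * A)
          = postP α * α * κ * (A - κ * B) + postP α * (1 - κ ^ 2) * (1 - α) * B := by
        linear_combination (-B) * hκ
      refine ⟨mul_pos hp hB, sub_nonneg.mp (this ▸ add_nonneg ?_ ?_)⟩
      · exact mul_nonneg (by positivity) (by linarith)
      · exact mul_nonneg (mul_nonneg (mul_nonneg hp.le (by nlinarith)) (by linarith)) hB.le

lemma inputLaw_pos (h0 : 0 < α) (h1 : α < 1) (s : Bool) (n : ℕ) (x : Fin n → Bool) :
    0 < inputLaw α s n x :=
  have ⟨_, hκ0, hκ1, hκ⟩ := exists_quadratic_root_mem_Ioc h0 h1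
  (inputLaw_pos_and_ratio h0 h1 hκ0 hκ1 hκ n s x).1

lemma sum_inputLaw_snoc (h0 : 0 < α) (h1 : α < 1) :
    ∀ (k : ℕ) (s : Bool) (xs : Fin k → Bool),
      ∑ b, inputLaw α s (k + 1) (Fin.snoc xs b) = inputLaw α s k xs
  | 0, s, xs => by
    rw [sum_bool_eq_add_not _ s]
    simp only [Fin.snoc_zero, inputLaw, if_true, Bool.not_eq_self, if_false, mul_one]
    linear_combination -one_sub_postC h0 h1
  | k + 1, s, xs => by
    obtain ⟨a, xs, rfl⟩ : ∃ a xs', xs = Fin.cons a xs' := ⟨_, _, (Fin.cons_self_tail xs).symm⟩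
    simp only [← Fin.cons_snoc_eq_snoc_cons, inputLaw_cons]
    split_ifs
    · rw [Finset.sum_sub_distrib, ← Finset.mul_sum, ← Finset.mul_sum,
        sum_inputLaw_snoc h0 h1 k, sum_inputLaw_snoc h0 h1 k]
    · rw [← Finset.mul_sum, sum_inputLaw_snoc h0 h1 k]

lemma sum_inputLaw_mul_postQ (h0 : 0 < α) (h1 : α < 1) :
    ∀ (n : ℕ) (s : Bool) (y : Fin n → Bool),
      ∑ x, inputLaw α s n x * postQ α s n x y = markovProb (outKernel α) s n y
  | 0, _, _ => by simp [inputLaw, postQ, markovProb]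
  | n + 1, s, y => by
    obtain ⟨b, y, rfl⟩ : ∃ b y', y = Fin.cons b y' := ⟨_, _, (Fin.cons_self_tail y).symm⟩
    set S : Bool → ℝ := fun σ => ∑ x, inputLaw α σ n x * postQ α b n x y
    have hsplit : ∑ x, inputLaw α s (n + 1) x * postQ α s (n + 1) x (Fin.cons b y)
        = postW α b s s * (postC α * S s - postP α * α * S (!s))
          + postW α b (!s) s * (postP α * S (!s)) := by
      rw [sum_cons, sum_bool_eq_add_not _ s]
      simp only [postQ_cons, inputLaw_cons, if_true, Bool.not_eq_self,
        if_false, S, Finset.mul_sum, ← Finset.sum_sub_distrib, ← Finset.sum_add_distrib]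
      exact Finset.sum_congr rfl fun _ _ => by ring
    rw [hsplit, markovProb_cons]
    rcases Bool.eq_or_eq_not b s with rfl | rfl
    · simp only [postW, outKernel, S, if_true, Bool.not_eq_self, Bool.eq_not_self, if_false,
        sum_inputLaw_mul_postQ h0 h1 n b]
      ring
    · simp only [postW, outKernel, S, if_true, Bool.not_eq_self, if_false,
        sum_inputLaw_mul_postQ h0 h1 n (!s), one_sub_postC h0 h1]
      ring

lemma sum_inputLaw (h0 : 0 < α) (h1 : α < 1) (s : Bool) (n : ℕ) : ∑ x, inputLaw α s n x = 1 := by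
  rw [← sum_markovProb _ (sum_outKernel α) n s]
  simp only [← sum_inputLaw_mul_postQ h0 h1 n s]
  rw [Finset.sum_comm]
  simp only [← Finset.mul_sum, sum_postQ, mul_one]

lemma isCausalCond_inputLaw (h0 : 0 < α) (h1 : α < 1) (s : Bool) (n : ℕ) :
    IsCausalCond n (fun x _ => inputLaw α s n x) :=
  isCausalCond_of_marginals (inputLaw α s) (inputLaw_pos h0 h1 s) (fun _ => rfl)
    (sum_inputLaw_snoc h0 h1 · s) n

lemma dirInfo2_inputLaw (h0 : 0 < α) (h1 : α < 1) (s : Bool) (n : ℕ) :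
    dirInfo2 n (fun x _ => inputLaw α s n x) (postQ α s n) = n * -logb 2 (postC α) := by
  rw [dirInfo2_eq_of_output_eq _ _ _ (sum_inputLaw_mul_postQ h0 h1 n s)
    fun y => (markovProb_outKernel_pos h0 h1 s y).ne']
  exact sum_pmf_mul_postQ_mul_logb h0 h1 (sum_inputLaw h0 h1 s n) s

end InputLaw

end PostChannel

open PostChannel

theorem stmt_6_general (α : ℝ) (h0 : 0 < α) (h1 : α < 1) (s₀ : Bool) (n : ℕ) :
    IsGreatest {v : ℝ | ∃ r : (Fin n → Bool) → ℝ, (∀ x, 0 ≤ r x) ∧ (∑ x, r x) = 1 ∧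
        v = dirInfo2 n (fun x _ => r x) (postQ α s₀ n)}
      (-(n : ℝ) * Real.logb 2 ((1 + (1 - α) * α ^ (α / (1 - α)))⁻¹)) ∧
    IsGreatest {v : ℝ | ∃ p, IsCausalCond n p ∧ v = dirInfo2 n p (postQ α s₀ n)}
      (-(n : ℝ) * Real.logb 2 ((1 + (1 - α) * α ^ (α / (1 - α)))⁻¹)) := by
  have hval : -(n : ℝ) * logb 2 ((1 + (1 - α) * α ^ (α / (1 - α)))⁻¹)
      = n * -logb 2 (postC α) := by
    rw [postC, postA]; ring
  have hopt := (dirInfo2_inputLaw h0 h1 s₀ n).symm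
  rw [hval]
  refine ⟨⟨⟨inputLaw α s₀ n, fun x => (inputLaw_pos h0 h1 s₀ n x).le, sum_inputLaw h0 h1 s₀ n,
    hopt⟩, ?_⟩, ⟨⟨_, isCausalCond_inputLaw h0 h1 s₀ n, hopt⟩, ?_⟩⟩
  · rintro v ⟨r, hr0, hr, rfl⟩
    exact dirInfo2_pmf_le h0 h1 hr0 hr s₀
  · rintro v ⟨p, hp, rfl⟩
    exact dirInfo2_le_of_isCausalCond h0 h1 hp s₀

/-- **Feedback does not increase the capacity of the POST(α) channel**
(Theorem 2 of the paper, finite-horizon form).  For `α ∈ (0,1)`,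
`c = (1 + ᾱ·α^(α/ᾱ))⁻¹`, any initial state `s₀` and any `n ≥ 1`, the maximum of the
directed information `I(Xⁿ → Yⁿ)` over plain pmfs on `{0,1}ⁿ` (the nonfeedback problem)
and its maximum over all causal conditioning pmfs `p(xⁿ‖yⁿ⁻¹)` (the feedback problem)
are both attained and both equal `-n·log₂ c`. -/
theorem stmt_6 (α : ℝ) (h0 : 0 < α) (h1 : α < 1) (s₀ : Bool) (n : ℕ) (hn : 1 ≤ n) :
    IsGreatest {v : ℝ | ∃ r : (Fin n → Bool) → ℝ, (∀ x, 0 ≤ r x) ∧ (∑ x, r x) = 1 ∧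
        v = dirInfo2 n (fun x _ => r x) (postQ α s₀ n)}
      (-(n : ℝ) * Real.logb 2 ((1 + (1 - α) * α ^ (α / (1 - α)))⁻¹)) ∧
    IsGreatest {v : ℝ | ∃ p, IsCausalCond n p ∧ v = dirInfo2 n p (postQ α s₀ n)}
      (-(n : ℝ) * Real.logb 2 ((1 + (1 - α) * α ^ (α / (1 - α)))⁻¹)) :=
  stmt_6_general α h0 h1 s₀ n
end
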